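/- Let E ⊂ ℝ^{n+1} be a closed set with diam(E) < ∞, set δ(X) = dist(X,E), and suppose u is harmonic and bounded on ℝ^{n+1} \ E with ‖u‖_∞ = 1. Fix y ∈ E and r ≥ 100 diam(E), and set r₀ = 10 diam(E). Then ∬_{B(y,r) \ B(y,r₀)} |∇u(X)|² δ(X) dX ≤ C r^n, where C depends only on n. (The proof decomposes the annulus into dyadic annuli, applies Caccioppoli's inequality on each, uses δ(X) ≈ |X−y| when |X−y| ≥ 10 diam(E), and sums a geometric series.) -/

import Mathlib

/-!
Caccioppoli's inequality `∫ φ² |∇u|² ≤ 4 ∫ u² |∇φ|²`, obtained by integrating `Δu = 0` against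
`φ² u`, bounds the energy of `u` on the shell `ρ/2 ≤ |X - y| ≤ ρ` by `C ρⁿ⁺¹ / ρ²` as soon as the
doubled shell `ρ/4 ≤ |X - y| ≤ 2ρ` avoids `E`, which holds when `ρ > 4 diam E`; on that shell
`δ(X) ≤ |X - y| ≤ ρ`. The annulus `B(y,r) \ B(y, 10 diam E)` is covered by the dyadic shells
`ρ = r / 2ᵏ` meeting it, and their bounds `C ρⁿ` sum geometrically to `2 C rⁿ` when `n ≥ 1`.
For `n = 0` the sum diverges, but then `u` is affine on each half-line off `E`, hence constant
there since it is bounded, so `∇u` vanishes on the annulus.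
-/

open MeasureTheory Metric Set
open scoped ENNReal
noncomputable section

abbrev Euc (n : ℕ) := EuclideanSpace ℝ (Fin (n + 1))

/-- The Laplacian of `u`, computed in coordinates. -/
noncomputable def lap {n : ℕ} (u : Euc n → ℝ) (x : Euc n) : ℝ :=
  ∑ i : Fin (n + 1),
    fderiv ℝ (fun y => fderiv ℝ u y (EuclideanSpace.single i (1 : ℝ))) x
      (EuclideanSpace.single i (1 : ℝ))

/-- `u` is harmonic on `s`: twice continuously differentiable with vanishing Laplacian. -/
def HarmonicOn {n : ℕ} (u : Euc n → ℝ) (s : Set (Euc n)) : Prop :=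
  ContDiffOn ℝ 2 u s ∧ ∀ x ∈ s, lap u x = 0

open scoped ContDiff

section Coordinates

variable {ι : Type*} [Fintype ι] [DecidableEq ι]

lemma EuclideanSpace.apply_single_eq_toDual_symm (L : StrongDual ℝ (EuclideanSpace ℝ ι)) (i : ι) :
    L (EuclideanSpace.single i 1) = (InnerProductSpace.toDual ℝ _).symm L i := by
  rw [← InnerProductSpace.toDual_symm_apply, EuclideanSpace.inner_single_right]
  simp

lemma EuclideanSpace.sum_apply_single_sq (L : StrongDual ℝ (EuclideanSpace ℝ ι)) :
    ∑ i, L (EuclideanSpace.single i 1) ^ 2 = ‖L‖ ^ 2 := by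
  simp only [EuclideanSpace.apply_single_eq_toDual_symm, ← LinearIsometryEquiv.norm_map
    (InnerProductSpace.toDual ℝ _).symm L, EuclideanSpace.norm_sq_eq, Real.norm_eq_abs, sq_abs]

lemma EuclideanSpace.abs_sum_apply_single_mul_le (L M : StrongDual ℝ (EuclideanSpace ℝ ι)) :
    |∑ i, L (EuclideanSpace.single i 1) * M (EuclideanSpace.single i 1)| ≤ ‖L‖ * ‖M‖ := by
  set e := (InnerProductSpace.toDual ℝ (EuclideanSpace ℝ ι)).symm
  have hinner : ∑ i, e L i * e M i = inner ℝ (e L) (e M) := by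
    simp only [PiLp.inner_apply, RCLike.inner_apply, conj_trivial, mul_comm]
  simp only [EuclideanSpace.apply_single_eq_toDual_symm]
  rw [hinner, ← e.norm_map L, ← e.norm_map M]
  exact abs_real_inner_le_norm (e L) (e M)

end Coordinates

lemma ContinuousOn.integrable_of_forall_notMem_eq_zero {X E : Type*} [TopologicalSpace X]
    [T2Space X] [MeasurableSpace X] [OpensMeasurableSpace X] [NormedAddCommGroup E]
    {μ : Measure X} [IsFiniteMeasureOnCompacts μ] {f : X → E} {s K : Set X}
    (hf : ContinuousOn f s) (hK : IsCompact K) (hKs : K ⊆ s) (h0 : ∀ x ∉ K, f x = 0) :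
    Integrable f μ :=
  ((hf.mono hKs).integrableOn_compact hK).integrable_of_forall_notMem_eq_zero h0

lemma tsupport_sq_mul_subset {X R : Type*} [TopologicalSpace X] [MonoidWithZero R]
    [NoZeroDivisors R] (φ u : X → R) : tsupport (fun z => φ z ^ 2 * u z) ⊆ tsupport φ :=
  tsupport_mul_subset_left.trans (by rw [tsupport, Function.support_pow _ two_ne_zero]; rfl)

lemma hasFDerivAt_sq_mul {E : Type*} [NormedAddCommGroup E] [NormedSpace ℝ E] {s : Set E}
    {u φ : E → ℝ} (hs : IsOpen s) (hu : DifferentiableOn ℝ u s) (hφ : Differentiable ℝ φ)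
    (hφs : tsupport φ ⊆ s) (x : E) :
    HasFDerivAt (fun z => φ z ^ 2 * u z)
      (φ x ^ 2 • fderiv ℝ u x + (2 * φ x * u x) • fderiv ℝ φ x) x := by
  by_cases hx : x ∈ tsupport φ
  · refine (((hφ x).hasFDerivAt.pow 2).mul
      ((hu x (hφs hx)).differentiableAt (hs.mem_nhds (hφs hx))).hasFDerivAt).congr_fderiv ?_
    ext v
    simp only [Nat.add_one_sub_one, pow_one, nsmul_eq_mul, Nat.cast_ofNat, add_apply, smul_apply,
      smul_eq_mul]
    ring
  · simpa [image_eq_zero_of_notMem_tsupport hx, fderiv_of_notMem_tsupport ℝ hx] using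
      HasFDerivAt.of_notMem_tsupport ℝ (fun h => hx (tsupport_sq_mul_subset φ u h))

lemma exists_smooth_bump_profile : ∃ ψ : ℝ → ℝ, ContDiff ℝ ∞ ψ ∧ HasCompactSupport ψ ∧
    EqOn ψ 1 (Icc (1 / 2) 1) ∧ ∀ t, t ≤ 1 / 4 ∨ 2 ≤ t → ψ t = 0 := by
  set ψ : ℝ → ℝ := fun t => Real.smoothTransition (4 * t - 1) * Real.smoothTransition (2 - t)
  have hzero : ∀ t, t ≤ 1 / 4 ∨ 2 ≤ t → ψ t = 0 := by
    rintro t (ht | ht)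
    · simp [ψ, Real.smoothTransition.zero_of_nonpos (show 4 * t - 1 ≤ 0 by linarith)]
    · simp [ψ, Real.smoothTransition.zero_of_nonpos (show 2 - t ≤ 0 by linarith)]
  refine ⟨ψ, ?_, ?_, ?_, hzero⟩
  · exact (Real.smoothTransition.contDiff.comp (by fun_prop)).mul
      (Real.smoothTransition.contDiff.comp (by fun_prop))
  · refine HasCompactSupport.of_support_subset_isCompact (isCompact_Icc (a := 1 / 4) (b := 2)) ?_
    intro t ht
    by_contra h
    rw [mem_Icc, not_and_or, not_le, not_le] at h
    exact ht (hzero t (h.imp le_of_lt le_of_lt))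
  · rintro t ⟨h1, h2⟩
    simp [ψ, Real.smoothTransition.one_of_one_le (show 1 ≤ 4 * t - 1 by linarith),
      Real.smoothTransition.one_of_one_le (show 1 ≤ 2 - t by linarith)]

lemma exists_annular_cutoff {F : Type*} [NormedAddCommGroup F] [InnerProductSpace ℝ F] :
    ∃ M : ℝ, 0 < M ∧ ∀ (y : F) {ρ : ℝ}, 0 < ρ → ∃ φ : F → ℝ, ContDiff ℝ ∞ φ ∧
      EqOn φ 1 (closedBall y ρ \ ball y (ρ / 2)) ∧
      tsupport φ ⊆ closedBall y (2 * ρ) \ ball y (ρ / 4) ∧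
      ∀ x, ‖fderiv ℝ φ x‖ ≤ M / ρ := by
  obtain ⟨ψ, hψ, hψc, hψ1, hψ0⟩ := exists_smooth_bump_profile
  obtain ⟨M, hM⟩ := hψ.lipschitzWith_of_hasCompactSupport hψc (by simp)
  refine ⟨max M 1, by positivity, fun y ρ hρ => ?_⟩
  set φ : F → ℝ := fun x => ψ (dist x y / ρ)
  have hφ0 : ∀ x, dist x y ≤ ρ / 4 ∨ 2 * ρ ≤ dist x y → φ x = 0 := fun x hx =>
    hψ0 _ (hx.imp (fun h => by rw [div_le_iff₀ hρ]; linarith)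
      (fun h => by rwa [le_div_iff₀ hρ]))
  refine ⟨φ, ?_, ?_, ?_, fun x => ?_⟩
  · refine contDiff_iff_contDiffAt.2 fun x => ?_
    rcases lt_or_ge (dist x y) (ρ / 4) with hx | hx
    · refine (contDiffAt_const (c := (0 : ℝ))).congr_of_eventuallyEq ?_
      filter_upwards [isOpen_ball.mem_nhds (mem_ball.2 hx)] with z hz
      exact hφ0 z (Or.inl (mem_ball.1 hz).le)
    · have hxy : x ≠ y := by rintro rfl; rw [dist_self] at hx; linarith
      exact hψ.contDiffAt.comp x ((contDiffAt_id.dist ℝ contDiffAt_const hxy).div_const ρ)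
  · rintro x ⟨hx1, hx2⟩
    rw [mem_closedBall] at hx1
    rw [mem_ball, not_lt] at hx2
    exact hψ1 ⟨by rwa [le_div_iff₀ hρ, div_mul_eq_mul_div, one_mul], by rwa [div_le_one hρ]⟩
  · refine closure_minimal (fun x hx => ?_)
      (isClosed_closedBall.sdiff isOpen_ball)
    by_contra h
    rw [mem_sdiff, mem_closedBall, mem_ball, not_and_or, not_le, not_not] at h
    exact hx (hφ0 x (h.symm.imp le_of_lt le_of_lt))
  · have hlip : LipschitzWith (max M 1 * (Real.toNNReal ρ)⁻¹) φ := by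
      refine (hM.weaken (le_max_left M 1)).comp (LipschitzWith.of_dist_le_mul fun x z => ?_)
      rw [Real.dist_eq, ← sub_div, abs_div, abs_of_pos hρ, NNReal.coe_inv,
        Real.coe_toNNReal _ hρ.le, div_eq_inv_mul]
      exact mul_le_mul_of_nonneg_left (abs_dist_sub_le x z y) (inv_nonneg.2 hρ.le)
    calc ‖fderiv ℝ φ x‖ ≤ _ := norm_fderiv_le_of_lipschitz ℝ hlip
      _ = max M 1 / ρ := by
        rw [NNReal.coe_mul, NNReal.coe_inv, Real.coe_toNNReal _ hρ.le, div_eq_mul_inv]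

section Caccioppoli

variable {n : ℕ} {s : Set (Euc n)} {u φ : Euc n → ℝ}

lemma HarmonicOn.integral_sum_fderiv_sq_mul_mul_eq_zero (hu : HarmonicOn u s) (hs : IsOpen s)
    (hφ : ContDiff ℝ 1 φ) (hφc : HasCompactSupport φ) (hφs : tsupport φ ⊆ s) :
    Integrable (fun x => ∑ i, fderiv ℝ (fun z => φ z ^ 2 * u z) x (EuclideanSpace.single i 1) *
      fderiv ℝ u x (EuclideanSpace.single i 1)) ∧
    ∫ x, ∑ i, fderiv ℝ (fun z => φ z ^ 2 * u z) x (EuclideanSpace.single i 1) *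
      fderiv ℝ u x (EuclideanSpace.single i 1) = 0 := by
  have hint : ∀ f : Euc n → ℝ, ContinuousOn f s → (∀ x ∉ tsupport φ, f x = 0) → Integrable f :=
    fun f hf h0 => hf.integrable_of_forall_notMem_eq_zero hφc hφs h0
  set w : Euc n → ℝ := fun z => φ z ^ 2 * u z
  have hw0 : ∀ x ∉ tsupport φ, w x = 0 := fun x hx =>
    image_eq_zero_of_notMem_tsupport fun h => hx (tsupport_sq_mul_subset φ u h)
  have hDw0 : ∀ x ∉ tsupport φ, fderiv ℝ w x = 0 := fun x hx =>
    fderiv_of_notMem_tsupport ℝ fun h => hx (tsupport_sq_mul_subset φ u h)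
  have hw : ContDiffOn ℝ 1 w s := (hφ.contDiffOn.pow 2).mul (hu.1.of_le one_le_two)
  have hDu : ∀ v, ContDiffOn ℝ 1 (fun z => fderiv ℝ u z v) s := fun v =>
    (hu.1.fderiv_of_isOpen hs (by norm_num)).clm_apply contDiffOn_const
  have hint₁ : ∀ i : Fin (n + 1), Integrable fun x =>
      fderiv ℝ w x (EuclideanSpace.single i 1) * fderiv ℝ u x (EuclideanSpace.single i 1) :=
    fun i => hint _ (((hw.continuousOn_fderiv_of_isOpen hs le_rfl).clm_apply
      continuousOn_const).mul (hDu _).continuousOn) fun x hx => by simp [hDw0 x hx]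
  have hint₂ : ∀ i : Fin (n + 1), Integrable fun x =>
      w x * fderiv ℝ (fun z => fderiv ℝ u z (EuclideanSpace.single i 1)) x
        (EuclideanSpace.single i 1) :=
    fun i => hint _ (hw.continuousOn.mul
      (((hDu _).continuousOn_fderiv_of_isOpen hs le_rfl).clm_apply continuousOn_const))
      fun x hx => by simp [hw0 x hx]
  have hibp : ∀ i : Fin (n + 1),
      ∫ x, w x * fderiv ℝ (fun z => fderiv ℝ u z (EuclideanSpace.single i 1)) x
        (EuclideanSpace.single i 1) =
      -∫ x, fderiv ℝ w x (EuclideanSpace.single i 1) * fderiv ℝ u x (EuclideanSpace.single i 1) :=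
    fun i => integral_mul_fderiv_eq_neg_fderiv_mul_of_integrable (hint₁ i) (hint₂ i)
      (hint _ (hw.continuousOn.mul (hDu _).continuousOn) fun x hx => by simp [hw0 x hx])
      (fun x _ => (hasFDerivAt_sq_mul hs (hu.1.differentiableOn two_ne_zero)
        (hφ.differentiable one_ne_zero) hφs x).differentiableAt)
      (fun x hx => ((hDu _).differentiableOn one_ne_zero x (hφs (tsupport_sq_mul_subset φ u hx))
        ).differentiableAt (hs.mem_nhds (hφs (tsupport_sq_mul_subset φ u hx))))
  have hlap : ∀ x, ∑ i, w x * fderiv ℝ (fun z => fderiv ℝ u z (EuclideanSpace.single i 1)) x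
      (EuclideanSpace.single i 1) = 0 := by
    intro x
    rw [← Finset.mul_sum]
    by_cases hx : x ∈ s
    · exact mul_eq_zero_of_right _ (hu.2 x hx)
    · exact mul_eq_zero_of_left (hw0 x fun h => hx (hφs h)) _
  refine ⟨integrable_finsetSum _ fun i _ => hint₁ i, ?_⟩
  rw [integral_finsetSum _ fun i _ => hint₁ i]
  simp_rw [← neg_eq_zero (a := ∑ i, _), ← Finset.sum_neg_distrib, ← hibp,
    ← integral_finsetSum _ fun i _ => hint₂ i, hlap, integral_zero]

theorem HarmonicOn.integral_sq_mul_norm_fderiv_sq_le (hu : HarmonicOn u s) (hs : IsOpen s)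
    (hφ : ContDiff ℝ 1 φ) (hφc : HasCompactSupport φ) (hφs : tsupport φ ⊆ s) :
    Integrable (fun x => φ x ^ 2 * ‖fderiv ℝ u x‖ ^ 2) ∧
    ∫ x, φ x ^ 2 * ‖fderiv ℝ u x‖ ^ 2 ≤ 4 * ∫ x, u x ^ 2 * ‖fderiv ℝ φ x‖ ^ 2 := by
  have hint : ∀ f : Euc n → ℝ, ContinuousOn f s → (∀ x ∉ tsupport φ, f x = 0) → Integrable f :=
    fun f hf h0 => hf.integrable_of_forall_notMem_eq_zero hφc hφs h0
  have hDu : ContinuousOn (fderiv ℝ u) s := hu.1.continuousOn_fderiv_of_isOpen hs one_le_two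
  have hDφ : Continuous (fderiv ℝ φ) := hφ.continuous_fderiv one_ne_zero
  have hA : Integrable fun x => φ x ^ 2 * ‖fderiv ℝ u x‖ ^ 2 :=
    hint _ ((hφ.continuous.pow 2).continuousOn.mul (hDu.norm.pow 2)) fun x hx => by
      simp [image_eq_zero_of_notMem_tsupport hx]
  have hC : Integrable fun x => u x ^ 2 * ‖fderiv ℝ φ x‖ ^ 2 :=
    hint _ ((hu.1.continuousOn.pow 2).mul (hDφ.norm.pow 2).continuousOn) fun x hx => by
      simp [fderiv_of_notMem_tsupport ℝ hx]
  obtain ⟨hG, hG0⟩ := hu.integral_sum_fderiv_sq_mul_mul_eq_zero hs hφ hφc hφs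
  -- Young's inequality `2ab ≤ a²/2 + 2b²` absorbs the cross term `2 φ u ⟨∇u, ∇φ⟩`.
  have hpt : ∀ x, φ x ^ 2 * ‖fderiv ℝ u x‖ ^ 2 / 2 ≤
      (∑ i, fderiv ℝ (fun z => φ z ^ 2 * u z) x (EuclideanSpace.single i 1) *
        fderiv ℝ u x (EuclideanSpace.single i 1)) + 2 * (u x ^ 2 * ‖fderiv ℝ φ x‖ ^ 2) := by
    intro x
    have hsum : ∑ i, fderiv ℝ (fun z => φ z ^ 2 * u z) x (EuclideanSpace.single i 1) *
        fderiv ℝ u x (EuclideanSpace.single i 1) = φ x ^ 2 * ‖fderiv ℝ u x‖ ^ 2 +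
        2 * φ x * u x * ∑ i, fderiv ℝ u x (EuclideanSpace.single i 1) *
          fderiv ℝ φ x (EuclideanSpace.single i 1) := by
      rw [(hasFDerivAt_sq_mul hs (hu.1.differentiableOn two_ne_zero)
        (hφ.differentiable one_ne_zero) hφs x).fderiv, ← EuclideanSpace.sum_apply_single_sq,
        Finset.mul_sum, Finset.mul_sum, ← Finset.sum_add_distrib]
      refine Finset.sum_congr rfl fun i _ => ?_
      simp only [add_apply, smul_apply, smul_eq_mul]
      ring
    have hcross : |2 * φ x * u x * ∑ i, fderiv ℝ u x (EuclideanSpace.single i 1) *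
        fderiv ℝ φ x (EuclideanSpace.single i 1)| ≤
        2 * (|φ x| * ‖fderiv ℝ u x‖) * (|u x| * ‖fderiv ℝ φ x‖) := by
      calc _ = 2 * (|φ x| * |u x|) * |∑ i, fderiv ℝ u x (EuclideanSpace.single i 1) *
            fderiv ℝ φ x (EuclideanSpace.single i 1)| := by
            rw [abs_mul, abs_mul, abs_mul, abs_two]; ring
        _ ≤ 2 * (|φ x| * |u x|) * (‖fderiv ℝ u x‖ * ‖fderiv ℝ φ x‖) := by
            gcongr; exact EuclideanSpace.abs_sum_apply_single_mul_le _ _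
        _ = _ := by ring
    have ha : φ x ^ 2 * ‖fderiv ℝ u x‖ ^ 2 = (|φ x| * ‖fderiv ℝ u x‖) ^ 2 := by
      rw [mul_pow, sq_abs]
    have hb : u x ^ 2 * ‖fderiv ℝ φ x‖ ^ 2 = (|u x| * ‖fderiv ℝ φ x‖) ^ 2 := by
      rw [mul_pow, sq_abs]
    rw [hsum, ha, hb]
    nlinarith [(abs_le.1 hcross).1,
      sq_nonneg (|φ x| * ‖fderiv ℝ u x‖ - 2 * (|u x| * ‖fderiv ℝ φ x‖))]
  refine ⟨hA, ?_⟩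
  calc ∫ x, φ x ^ 2 * ‖fderiv ℝ u x‖ ^ 2 = 2 * ∫ x, φ x ^ 2 * ‖fderiv ℝ u x‖ ^ 2 / 2 := by
        rw [integral_div]; ring
    _ ≤ 2 * ∫ x, ((∑ i, fderiv ℝ (fun z => φ z ^ 2 * u z) x (EuclideanSpace.single i 1) *
          fderiv ℝ u x (EuclideanSpace.single i 1)) + 2 * (u x ^ 2 * ‖fderiv ℝ φ x‖ ^ 2)) :=
        mul_le_mul_of_nonneg_left
          (integral_mono (hA.div_const 2) (hG.add (hC.const_mul 2)) hpt) two_pos.le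
    _ = 4 * ∫ x, u x ^ 2 * ‖fderiv ℝ φ x‖ ^ 2 := by
        rw [integral_add hG (hC.const_mul 2), hG0, integral_const_mul]; ring

end Caccioppoli

theorem exists_lintegral_shell_norm_fderiv_sq_le (n : ℕ) : ∃ K : ℝ, 0 < K ∧
    ∀ {s : Set (Euc n)} {u : Euc n → ℝ}, IsOpen s → HarmonicOn u s → (∀ x ∈ s, |u x| ≤ 1) →
    ∀ (y : Euc n) {ρ : ℝ}, 0 < ρ → closedBall y (2 * ρ) \ ball y (ρ / 4) ⊆ s →
      ∫⁻ x in closedBall y ρ \ ball y (ρ / 2), ENNReal.ofReal (‖fderiv ℝ u x‖ ^ 2) ≤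
        ENNReal.ofReal (K * ρ ^ (n + 1) / ρ ^ 2) := by
  obtain ⟨M, hM, hcut⟩ := exists_annular_cutoff (F := Euc n)
  set V := volume.real (ball (0 : Euc n) 1)
  have hV : 0 < V := ENNReal.toReal_pos (measure_ball_pos _ _ one_pos).ne' measure_ball_lt_top.ne
  refine ⟨4 * M ^ 2 * 2 ^ (n + 1) * V, by positivity, ?_⟩
  intro s u hs hu hu1 y ρ hρ hsub
  obtain ⟨φ, hφ, hφ1, hφsupp, hDφ⟩ := hcut y hρ
  have hφc : HasCompactSupport φ := (isCompact_closedBall y (2 * ρ)).of_isClosed_subset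
    (isClosed_tsupport φ) (hφsupp.trans sdiff_subset)
  obtain ⟨hint, hcacc⟩ := hu.integral_sq_mul_norm_fderiv_sq_le hs (hφ.of_le (by simp)) hφc
    (hφsupp.trans hsub)
  have hpt : ∀ x, u x ^ 2 * ‖fderiv ℝ φ x‖ ^ 2 ≤ (M / ρ) ^ 2 := by
    intro x
    by_cases hx : x ∈ tsupport φ
    · have hu2 : u x ^ 2 ≤ 1 := by
        rw [← sq_abs]; exact pow_le_one₀ (abs_nonneg _) (hu1 x (hsub (hφsupp hx)))
      have hD2 : ‖fderiv ℝ φ x‖ ^ 2 ≤ (M / ρ) ^ 2 := pow_le_pow_left₀ (norm_nonneg _) (hDφ x) 2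
      nlinarith [sq_nonneg ‖fderiv ℝ φ x‖]
    · simp [fderiv_of_notMem_tsupport ℝ hx, sq_nonneg]
  have hrhs : ∫ x, u x ^ 2 * ‖fderiv ℝ φ x‖ ^ 2 ≤ (M / ρ) ^ 2 * ((2 * ρ) ^ (n + 1) * V) := by
    rw [← setIntegral_eq_integral_of_forall_compl_eq_zero (s := closedBall y (2 * ρ))
      fun x hx => by simp [fderiv_of_notMem_tsupport ℝ fun h => hx (hφsupp h).1]]
    refine (Real.le_norm_self _).trans ((norm_setIntegral_le_of_norm_le_const (C := (M / ρ) ^ 2)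
      measure_closedBall_lt_top fun x _ => ?_).trans_eq ?_)
    · rw [Real.norm_of_nonneg (by positivity)]
      exact hpt x
    · rw [Measure.addHaar_real_closedBall _ _ (by positivity), finrank_euclideanSpace_fin]
  calc ∫⁻ x in closedBall y ρ \ ball y (ρ / 2), ENNReal.ofReal (‖fderiv ℝ u x‖ ^ 2)
      = ∫⁻ x in closedBall y ρ \ ball y (ρ / 2), ENNReal.ofReal (φ x ^ 2 * ‖fderiv ℝ u x‖ ^ 2) :=
        setLIntegral_congr_fun (measurableSet_closedBall.diff measurableSet_ball) fun x hx => by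
          simp [hφ1 hx]
    _ ≤ ∫⁻ x, ENNReal.ofReal (φ x ^ 2 * ‖fderiv ℝ u x‖ ^ 2) := setLIntegral_le_lintegral _ _
    _ = ENNReal.ofReal (∫ x, φ x ^ 2 * ‖fderiv ℝ u x‖ ^ 2) :=
        (ofReal_integral_eq_lintegral_ofReal hint (ae_of_all _ fun x => by positivity)).symm
    _ ≤ ENNReal.ofReal (4 * M ^ 2 * 2 ^ (n + 1) * V * ρ ^ (n + 1) / ρ ^ 2) := by
        refine ENNReal.ofReal_le_ofReal (hcacc.trans ?_)
        calc _ ≤ 4 * ((M / ρ) ^ 2 * ((2 * ρ) ^ (n + 1) * V)) := by gcongr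
          _ = _ := by field_simp; ring

theorem exists_lintegral_shell_norm_fderiv_sq_mul_infDist_le (n : ℕ) : ∃ K : ℝ, 0 < K ∧
    ∀ {E : Set (Euc n)} {u : Euc n → ℝ}, IsClosed E → Bornology.IsBounded E →
    HarmonicOn u Eᶜ → (∀ X ∉ E, |u X| ≤ 1) → ∀ {y : Euc n}, y ∈ E → ∀ {ρ : ℝ}, 0 < ρ →
      4 * diam E < ρ →
      ∫⁻ X in closedBall y ρ \ ball y (ρ / 2),
          ENNReal.ofReal (‖fderiv ℝ u X‖ ^ 2 * infDist X E) ≤ ENNReal.ofReal (K * ρ ^ n) := by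
  obtain ⟨K, hK, henergy⟩ := exists_lintegral_shell_norm_fderiv_sq_le n
  refine ⟨K, hK, ?_⟩
  intro E u hE hEb hu hub y hy ρ hρ hdiam
  have hsub : closedBall y (2 * ρ) \ ball y (ρ / 4) ⊆ Eᶜ := fun X hX hXE => hX.2 <|
    mem_ball.2 ((dist_le_diam_of_mem hEb hXE hy).trans_lt (by linarith))
  calc ∫⁻ X in closedBall y ρ \ ball y (ρ / 2), ENNReal.ofReal (‖fderiv ℝ u X‖ ^ 2 * infDist X E)
      ≤ ∫⁻ X in closedBall y ρ \ ball y (ρ / 2),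
          ENNReal.ofReal ρ * ENNReal.ofReal (‖fderiv ℝ u X‖ ^ 2) := by
        refine setLIntegral_mono' (measurableSet_closedBall.diff measurableSet_ball)
          fun X hX => ?_
        rw [← ENNReal.ofReal_mul hρ.le, mul_comm ρ]
        exact ENNReal.ofReal_le_ofReal (mul_le_mul_of_nonneg_left
          ((infDist_le_dist_of_mem hy).trans (mem_closedBall.1 hX.1)) (sq_nonneg _))
    _ = ENNReal.ofReal ρ * ∫⁻ X in closedBall y ρ \ ball y (ρ / 2),
          ENNReal.ofReal (‖fderiv ℝ u X‖ ^ 2) := lintegral_const_mul' _ _ ENNReal.ofReal_ne_top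
    _ ≤ ENNReal.ofReal ρ * ENNReal.ofReal (K * ρ ^ (n + 1) / ρ ^ 2) :=
        mul_le_mul_right (henergy hE.isOpen_compl hu hub y hρ hsub) _
    _ = ENNReal.ofReal (K * ρ ^ n) := by
        rw [← ENNReal.ofReal_mul hρ.le]
        congr 1
        field_simp
        ring

lemma setLIntegral_le_of_dyadic_shells {X : Type*} [MetricSpace X] [MeasurableSpace X]
    {μ : Measure X} [NullSingletonClass μ] {g : X → ℝ≥0∞} {A : Set X} {y : X}
    {r c : ℝ} {n : ℕ} (hn : n ≠ 0) (hc : 0 ≤ c) (hr : 0 ≤ r) (hA : A ⊆ ball y r)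
    (hshell : ∀ ρ, 0 < ρ → (closedBall y ρ \ ball y (ρ / 2) ∩ A).Nonempty →
      ∫⁻ x in closedBall y ρ \ ball y (ρ / 2) ∩ A, g x ∂μ ≤ ENNReal.ofReal (c * ρ ^ n)) :
    ∫⁻ x in A, g x ∂μ ≤ ENNReal.ofReal (2 * c * r ^ n) := by
  set S : ℕ → Set X := fun k => closedBall y (r / 2 ^ k) \ ball y (r / 2 ^ k / 2) ∩ A
  have hcover : A \ {y} ⊆ ⋃ k, S k := by
    rintro x ⟨hxA, hxy⟩
    have hd : 0 < dist x y := dist_pos.2 hxy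
    have hdr : dist x y < r := mem_ball.1 (hA hxA)
    obtain ⟨k, hk1, hk2⟩ := exists_nat_pow_near ((one_le_div hd).2 hdr.le) one_lt_two
    rw [le_div_iff₀ hd] at hk1
    rw [div_lt_iff₀ hd, pow_succ] at hk2
    refine mem_iUnion.2 ⟨k, ⟨mem_closedBall.2 ?_, fun h => ?_⟩, hxA⟩
    · rw [le_div_iff₀ (by positivity)]
      linarith
    · rw [mem_ball, div_div, lt_div_iff₀ (by positivity)] at h
      linarith
  have hterm : ∀ k, ∫⁻ x in S k, g x ∂μ ≤ ENNReal.ofReal (c * r ^ n * (1 / 2) ^ k) := by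
    intro k
    rcases (S k).eq_empty_or_nonempty with hS | hS
    · simp [hS]
    have hr0 : 0 < r := pos_of_mem_ball (hA hS.some_mem.2)
    refine (hshell _ (by positivity) hS).trans (ENNReal.ofReal_le_ofReal ?_)
    rw [mul_assoc]
    refine mul_le_mul_of_nonneg_left ?_ hc
    calc (r / 2 ^ k) ^ n = r ^ n * ((1 / 2) ^ k) ^ n := by
          rw [one_div_pow, ← mul_pow, mul_one_div]
      _ ≤ r ^ n * (1 / 2) ^ k := by
          have hq : ((1 : ℝ) / 2) ^ k ≤ 1 := pow_le_one₀ (by norm_num) (by norm_num)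
          gcongr
          exact pow_le_of_le_one (by positivity) hq hn
  calc ∫⁻ x in A, g x ∂μ = ∫⁻ x in A \ {y}, g x ∂μ :=
        setLIntegral_congr (sdiff_null_ae_eq_self (measure_singleton y)).symm
    _ ≤ ∫⁻ x in ⋃ k, S k, g x ∂μ := lintegral_mono_set hcover
    _ ≤ ∑' k, ∫⁻ x in S k, g x ∂μ := lintegral_iUnion_le _ _
    _ ≤ ∑' k, ENNReal.ofReal (c * r ^ n * (1 / 2) ^ k) := ENNReal.tsum_le_tsum hterm
    _ = ENNReal.ofReal (2 * c * r ^ n) := by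
        rw [← ENNReal.ofReal_tsum_of_nonneg (fun k => by positivity)
          (summable_geometric_two.mul_left _), tsum_mul_left, tsum_geometric_two, mul_comm,
          mul_assoc]

lemma eq_zero_of_bounded_of_hasDerivAt_zero_on_Ioi {f f' : ℝ → ℝ} {a C t : ℝ}
    (hf : ∀ t ∈ Ioi a, HasDerivAt f (f' t) t) (hf' : ∀ t ∈ Ioi a, HasDerivAt f' 0 t)
    (hC : ∀ t ∈ Ioi a, |f t| ≤ C) (ht : a < t) : f' t = 0 := by
  have hconst : ∀ s ∈ Ioi a, f' s = f' t := fun s hs =>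
    isOpen_Ioi.is_const_of_deriv_eq_zero isPreconnected_Ioi
      (fun x hx => (hf' x hx).differentiableAt.differentiableWithinAt)
      (fun x hx => (hf' x hx).deriv) hs ht
  by_contra hne
  have hpos : 0 < |f' t| := abs_pos.2 hne
  set T := t + (2 * C + 1) / |f' t|
  have hC0 : 0 ≤ C := (abs_nonneg _).trans (hC t ht)
  have htT : t < T := lt_add_of_pos_right t (by positivity)
  have hIcc : ∀ x ∈ Icc t T, a < x := fun x hx => ht.trans_le hx.1
  obtain ⟨c, hc, hslope⟩ := exists_hasDerivAt_eq_slope f f' htT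
    (fun x hx => (hf x (hIcc x hx)).continuousAt.continuousWithinAt)
    (fun x hx => hf x (hIcc x (Ioo_subset_Icc_self hx)))
  rw [hconst c (hIcc c (Ioo_subset_Icc_self hc)), eq_div_iff (sub_pos.2 htT).ne'] at hslope
  have h1 : |f' t| * (T - t) = 2 * C + 1 := by
    simp only [T, add_sub_cancel_left]; field_simp
  have h2 : |f' t * (T - t)| ≤ 2 * C := by
    rw [hslope]
    exact (abs_sub _ _).trans (by linarith [hC T (hIcc T ⟨htT.le, le_rfl⟩), hC t ht])
  rw [abs_mul, abs_of_pos (sub_pos.2 htT), h1] at h2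
  linarith

lemma euc0_eq_smul_single (v : Euc 0) : v = v 0 • EuclideanSpace.single 0 1 := by
  ext i; fin_cases i; simp

lemma euc0_clm_apply (L : Euc 0 →L[ℝ] ℝ) (v : Euc 0) :
    L v = v 0 * L (EuclideanSpace.single 0 1) := by
  conv_lhs => rw [euc0_eq_smul_single v]
  rw [map_smul, smul_eq_mul]

lemma fderiv_fderiv_apply_euc0 {u : Euc 0 → ℝ} {x : Euc 0}
    (hu : DifferentiableAt ℝ (fun z => fderiv ℝ u z (EuclideanSpace.single 0 1)) x) (w : Euc 0) :
    fderiv ℝ (fun z => fderiv ℝ u z w) x w = w 0 ^ 2 * lap u x := by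
  have hfun : (fun z => fderiv ℝ u z w) =
      fun z => w 0 * fderiv ℝ u z (EuclideanSpace.single 0 1) :=
    funext fun z => euc0_clm_apply _ w
  rw [hfun, fderiv_const_mul hu, smul_apply, euc0_clm_apply _ w, lap,
    Fin.sum_univ_one, smul_eq_mul]
  ring

theorem HarmonicOn.fderiv_eq_zero_euc0 {E : Set (Euc 0)} {u : Euc 0 → ℝ} (hu : HarmonicOn u Eᶜ)
    (hE : IsClosed E) (hEb : Bornology.IsBounded E) (hub : ∀ X ∉ E, |u X| ≤ 1) {y X : Euc 0}
    (hy : y ∈ E) (hX : diam E < dist X y) : fderiv ℝ u X = 0 := by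
  set w := X - y
  have hw : 0 < ‖w‖ := by rw [← dist_eq_norm]; exact diam_nonneg.trans_lt hX
  set γ : ℝ → Euc 0 := fun t => y + t • w
  have hγ : ∀ t, HasDerivAt γ w t := fun t => by
    simpa only [id, one_smul] using ((hasDerivAt_id t).smul_const w).const_add y
  have hγE : ∀ t ∈ Ioi (diam E / ‖w‖), γ t ∉ E := by
    intro t ht hmem
    have ht0 : 0 < t := (div_nonneg diam_nonneg hw.le).trans_lt ht
    have := dist_le_diam_of_mem hEb hmem hy
    rw [dist_eq_norm, add_sub_cancel_left, norm_smul, Real.norm_of_nonneg ht0.le] at this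
    rw [mem_Ioi, div_lt_iff₀ hw] at ht
    linarith
  have hopen := hE.isOpen_compl
  have hDu : ∀ v, ContDiffOn ℝ 1 (fun z => fderiv ℝ u z v) Eᶜ := fun v =>
    (hu.1.fderiv_of_isOpen hopen (by norm_num)).clm_apply contDiffOn_const
  have hDu_diff : ∀ v, ∀ z ∈ Eᶜ, DifferentiableAt ℝ (fun z => fderiv ℝ u z v) z := fun v z hz =>
    ((hDu v).differentiableOn one_ne_zero z hz).differentiableAt (hopen.mem_nhds hz)
  have h1 : fderiv ℝ u (γ 1) w = 0 := by
    refine eq_zero_of_bounded_of_hasDerivAt_zero_on_Ioi (f := fun t => u (γ t))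
      (f' := fun t => fderiv ℝ u (γ t) w)
      (fun t ht => ?_) (fun t ht => ?_) (fun t ht => hub _ (hγE t ht))
      ((div_lt_one hw).2 (by rwa [← dist_eq_norm]))
    · exact (((hu.1.differentiableOn two_ne_zero _ (hγE t ht)).differentiableAt
        (hopen.mem_nhds (hγE t ht))).hasFDerivAt.comp_hasDerivAt t (hγ t))
    · have := (hDu_diff w _ (hγE t ht)).hasFDerivAt.comp_hasDerivAt t (hγ t)
      rwa [fderiv_fderiv_apply_euc0 (hDu_diff _ _ (hγE t ht)), hu.2 _ (hγE t ht), mul_zero]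
        at this
  have hγ1 : γ 1 = X := by simp [γ, w]
  have hw0 : w 0 ≠ 0 := by
    intro h
    rw [euc0_eq_smul_single w, h, zero_smul, norm_zero] at hw
    exact lt_irrefl _ hw
  rw [hγ1, euc0_clm_apply, mul_eq_zero] at h1
  ext v
  rw [euc0_clm_apply, h1.resolve_left hw0, mul_zero]
  rfl

/-- If `E ⊂ ℝ^{n+1}` is closed and bounded, `u` is harmonic and bounded by `1` on `ℝ^{n+1} \ E`,
`y ∈ E` and `r ≥ 100 diam E`, then the Carleson integral of `|∇u|² δ` over the annulus
`B(y,r) \ B(y, 10 diam E)` is at most `C rⁿ`, with `C` depending only on `n`. -/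
theorem statement2 (n : ℕ) :
    ∃ C : ℝ, 0 < C ∧
      ∀ (E : Set (Euc n)) (u : Euc n → ℝ),
        IsClosed E → E.Nonempty → Bornology.IsBounded E →
        HarmonicOn u Eᶜ → (∀ X, X ∉ E → |u X| ≤ 1) →
        ∀ y ∈ E, ∀ r : ℝ, 100 * Metric.diam E ≤ r →
          ∫⁻ X in Metric.ball y r \ Metric.ball y (10 * Metric.diam E),
              ENNReal.ofReal (‖fderiv ℝ u X‖ ^ 2 * Metric.infDist X E) ≤
            ENNReal.ofReal (C * r ^ n) := by
  obtain ⟨K, hK, hshell⟩ := exists_lintegral_shell_norm_fderiv_sq_mul_infDist_le n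
  refine ⟨2 * K, by positivity, fun E u hE _ hEb hu hub y hy r hr => ?_⟩
  have hdiam : 0 ≤ diam E := diam_nonneg
  rcases Nat.eq_zero_or_pos n with rfl | hn
  · refine le_of_eq_of_le ?_ bot_le
    refine (setLIntegral_congr_fun (measurableSet_ball.diff measurableSet_ball)
      (g := 0) fun X hX => ?_).trans (lintegral_zero)
    have hfar : 10 * diam E ≤ dist X y := not_lt.1 hX.2
    rcases lt_or_ge (diam E) (dist X y) with h | h
    · simp [hu.fderiv_eq_zero_euc0 hE hEb hub hy h]
    · have : infDist X E = 0 := le_antisymm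
        ((infDist_le_dist_of_mem hy).trans (by linarith)) infDist_nonneg
      simp [this]
  · refine setLIntegral_le_of_dyadic_shells hn.ne' hK.le (by linarith) sdiff_subset
      fun ρ hρ ⟨Z, hZ, hZA⟩ => (lintegral_mono_set inter_subset_left).trans
        (hshell hE hEb hu hub hy hρ ?_)
    have := (not_lt.1 hZA.2).trans (mem_closedBall.1 hZ.1)
    linarith
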